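/- arXiv:1401.7414 — 5 statements merged into one kernel-verified Lean document; each statement's English description precedes it below -/
import Mathlib

section
/- A finite ring R is Frobenius if and only if for every matrix A over R (of any size m×n), the left row space {xA : x ∈ R^m} and the right column space {Ay : y ∈ R^n} have the same cardinality. -/
/-- A finite ring is Frobenius iff `|C|·|C^⊥| = |R|^n` for every left submodule
`C ≤ R^n`, where `C^⊥ = {y : c·y = 0 for all c ∈ C}`. -/
def IsFrobenius (R : Type) [Ring R] [Fintype R] : Prop :=
  ∀ (n : ℕ) (C : Submodule R (Fin n → R)),
    Nat.card C *
      Nat.card {y : Fin n → R // ∀ c ∈ C, ∑ i, c i * y i = 0} =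
    Fintype.card R ^ n

/-!
Viewing `y ↦ A *ᵥ y` as an additive map, the first isomorphism theorem gives
`|column space of A| · |ker A| = |R|^n`, and the right annihilator of the row space of `A` is
exactly `ker A`. Every left submodule of `R^n` is the row space of some matrix (take all its
elements as rows), so the Frobenius condition says `|row space of A| · |ker A| = |R|^n` for every
`A`; as `ker A` is nonempty, this is `|row space of A| = |column space of A|`.
-/

open Matrix

section
variable {R m n : Type*} [Ring R]

theorem card_range_mulVec_mul_card_ker [Fintype n] (A : Matrix m n R) :
    Nat.card (Set.range A.mulVec) * Nat.card {y : n → R // A *ᵥ y = 0} = Nat.card (n → R) := by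
  let f : (n → R) →+ (m → R) := AddMonoidHom.mk' A.mulVec A.mulVec_add
  calc Nat.card (Set.range A.mulVec) * Nat.card {y : n → R // A *ᵥ y = 0}
      = Nat.card f.ker * f.ker.index := by
        rw [mul_comm, AddSubgroup.index_ker]
        rfl
    _ = Nat.card (n → R) := f.ker.card_mul_index

theorem forall_mem_range_vecMulLinear_dotProduct_eq_zero_iff [Fintype m] [Fintype n]
    (A : Matrix m n R) (y : n → R) :
    (∀ c ∈ LinearMap.range A.vecMulLinear, c ⬝ᵥ y = 0) ↔ A *ᵥ y = 0 := by
  classical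
  simp only [LinearMap.mem_range, forall_exists_index, forall_apply_eq_imp_iff,
    vecMulLinear_apply, ← dotProduct_mulVec]
  refine ⟨fun h => funext fun i => ?_, fun h x => by rw [h, dotProduct_zero]⟩
  simpa using h (Pi.single i 1)

theorem exists_range_vecMulLinear_eq (C : Submodule R (n → R)) [Finite C] :
    ∃ (k : ℕ) (A : Matrix (Fin k) n R), LinearMap.range A.vecMulLinear = C := by
  obtain ⟨k, ⟨e⟩⟩ := Finite.exists_equiv_fin C
  refine ⟨k, Matrix.of fun i => e.symm i, ?_⟩
  rw [range_vecMulLinear]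
  convert C.span_eq
  exact (Set.range_comp Subtype.val e.symm).trans (by simp)

end

theorem isFrobenius_iff_card_range_vecMulLinear_mul_card_ker {R : Type} [Ring R] [Fintype R] :
    IsFrobenius R ↔ ∀ (m n : ℕ) (A : Matrix (Fin m) (Fin n) R),
      Nat.card (LinearMap.range A.vecMulLinear) * Nat.card {y : Fin n → R // A *ᵥ y = 0} =
        Fintype.card R ^ n := by
  have card_perp (m n : ℕ) (A : Matrix (Fin m) (Fin n) R) :
      Nat.card {y : Fin n → R // ∀ c ∈ LinearMap.range A.vecMulLinear, ∑ i, c i * y i = 0} =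
        Nat.card {y : Fin n → R // A *ᵥ y = 0} :=
    Nat.card_congr <| Equiv.subtypeEquivRight fun y =>
      forall_mem_range_vecMulLinear_dotProduct_eq_zero_iff A y
  constructor
  · intro hF m n A
    rw [← card_perp]
    exact hF n _
  · intro h n C
    obtain ⟨m, A, rfl⟩ := exists_range_vecMulLinear_eq C
    rw [card_perp]
    exact h m n A

/-- A finite ring `R` is Frobenius iff for every matrix `A ∈ R^{m×n}` the left
row space `{xA : x ∈ R^m}` and the right column space `{Ay : y ∈ R^n}` have the
same cardinality. -/
theorem frobenius_iff_rowSpace_card_eq_colSpace_card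
    (R : Type) [Ring R] [Fintype R] :
    IsFrobenius R ↔
      ∀ (m n : ℕ) (A : Matrix (Fin m) (Fin n) R),
        Nat.card {c : Fin n → R // ∃ x : Fin m → R, c = fun j => ∑ i, x i * A i j} =
        Nat.card {d : Fin m → R // ∃ y : Fin n → R, d = fun i => ∑ j, A i j * y j} := by
  rw [isFrobenius_iff_card_range_vecMulLinear_mul_card_ker]
  refine forall₃_congr fun m n A => ?_
  have card_row : Nat.card {c : Fin n → R // ∃ x : Fin m → R, c = fun j => ∑ i, x i * A i j} =
      Nat.card (LinearMap.range A.vecMulLinear) :=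
    Nat.card_congr <| Equiv.subtypeEquivRight fun _ => exists_congr fun _ => eq_comm
  have card_col : Nat.card {d : Fin m → R // ∃ y : Fin n → R, d = fun i => ∑ j, A i j * y j} =
      Nat.card (Set.range A.mulVec) :=
    Nat.card_congr <| Equiv.subtypeEquivRight fun _ => exists_congr fun _ => eq_comm
  have : Nonempty {y : Fin n → R // A *ᵥ y = 0} := ⟨⟨0, A.mulVec_zero⟩⟩
  have card_vectors : Fintype.card R ^ n = Nat.card (Fin n → R) := by
    rw [Nat.card_fun, Nat.card_fin, Nat.card_eq_fintype_card]
  rw [card_row, card_col, card_vectors, ← card_range_mulVec_mul_card_ker A,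
    Nat.mul_left_inj Nat.card_pos.ne']
end

section
/- For a finite Frobenius ring R, the map y ↦ Ay from R^n to R^m has kernel equal to C^⊥, where C is the left row space of A ∈ R^{m×n}; consequently |C^⊥|·|D| = |R|^n where D is the right column space of A. -/
namespace Matrix

variable {ι κ R : Type*} [Fintype ι] [Fintype κ]

theorem mulVec_eq_zero_iff_forall_vecMul_dotProduct [Semiring R] [DecidableEq ι]
    (A : Matrix ι κ R) (y : κ → R) :
    A *ᵥ y = 0 ↔ ∀ x : ι → R, x ᵥ* A ⬝ᵥ y = 0 := by
  refine ⟨fun hy x => by rw [← dotProduct_mulVec, hy, dotProduct_zero], fun h => ?_⟩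
  ext i
  simpa only [← dotProduct_mulVec, single_one_dotProduct, Pi.zero_apply] using h (Pi.single i 1)

/-- `y ↦ A *ᵥ y` as an additive map; it is not `R`-linear unless `R` is commutative. -/
def mulVecAddMonoidHom [NonUnitalNonAssocSemiring R] (A : Matrix ι κ R) :
    (κ → R) →+ (ι → R) where
  toFun := (A *ᵥ ·)
  map_zero' := mulVec_zero A
  map_add' := mulVec_add A

end Matrix

open Matrix

theorem kernel_mulVec_eq_perp_and_card_general
    (R : Type) [Ring R] [Fintype R]
    (m n : ℕ) (A : Matrix (Fin m) (Fin n) R) :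
    {y : Fin n → R | (fun i => ∑ j, A i j * y j) = 0} =
      {y : Fin n → R |
        ∀ c ∈ {c : Fin n → R | ∃ x : Fin m → R, c = fun j => ∑ i, x i * A i j},
          ∑ j, c j * y j = 0} ∧
    Nat.card {y : Fin n → R |
        ∀ c ∈ {c : Fin n → R | ∃ x : Fin m → R, c = fun j => ∑ i, x i * A i j},
          ∑ j, c j * y j = 0} *
      Nat.card {d : Fin m → R | ∃ y : Fin n → R, d = fun i => ∑ j, A i j * y j} =
    Fintype.card R ^ n := by
  have hperp : {y : Fin n → R | (fun i => ∑ j, A i j * y j) = 0} =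
      {y : Fin n → R |
        ∀ c ∈ {c : Fin n → R | ∃ x : Fin m → R, c = fun j => ∑ i, x i * A i j},
          ∑ j, c j * y j = 0} := by
    ext y
    simp only [Set.mem_ofPred_eq, forall_exists_index, forall_eq_apply_imp_iff]
    exact mulVec_eq_zero_iff_forall_vecMul_dotProduct A y
  have hrange : {d : Fin m → R | ∃ y : Fin n → R, d = fun i => ∑ j, A i j * y j} =
      (mulVecAddMonoidHom A).range :=
    Set.ext fun d => exists_congr fun y => eq_comm
  refine ⟨hperp, ?_⟩
  rw [← hperp, hrange]
  change Nat.card (mulVecAddMonoidHom A).ker * Nat.card (mulVecAddMonoidHom A).range = _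
  rw [← AddSubgroup.index_ker, AddSubgroup.card_mul_index, Nat.card_fun, Nat.card_fin,
    Nat.card_eq_fintype_card]

/-- For a finite Frobenius ring `R` and a matrix `A ∈ R^{m×n}`, the map
`y ↦ Ay` has kernel equal to `C^⊥`, where `C` is the left row space of `A`;
consequently `|C^⊥|·|D| = |R|^n`, where `D` is the right column space. -/
theorem kernel_mulVec_eq_perp_and_card
    (R : Type) [Ring R] [Fintype R] (hR : IsFrobenius R)
    (m n : ℕ) (A : Matrix (Fin m) (Fin n) R) :
    {y : Fin n → R | (fun i => ∑ j, A i j * y j) = 0} =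
      {y : Fin n → R |
        ∀ c ∈ {c : Fin n → R | ∃ x : Fin m → R, c = fun j => ∑ i, x i * A i j},
          ∑ j, c j * y j = 0} ∧
    Nat.card {y : Fin n → R |
        ∀ c ∈ {c : Fin n → R | ∃ x : Fin m → R, c = fun j => ∑ i, x i * A i j},
          ∑ j, c j * y j = 0} *
      Nat.card {d : Fin m → R | ∃ y : Fin n → R, d = fun i => ∑ j, A i j * y j} =
    Fintype.card R ^ n :=
  kernel_mulVec_eq_perp_and_card_general R m n A
end

section
/- The homogeneous weight w_hom on a finite Frobenius ring R does not depend on the choice of generating character: if χ and χ' are both characters of (R,+) whose kernels contain no nonzero left ideal, then 1 − (1/|R^×|) Σ_{u∈R^×} χ(ux) = 1 − (1/|R^×|) Σ_{u∈R^×} χ'(ux) for all x ∈ R. -/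
open scoped Classical

/-- A generating character: a character of `(R,+)` whose kernel contains no
nonzero left ideal. -/
def IsGenChar {R : Type} [Ring R] [Fintype R] (χ : AddChar R ℂ) : Prop :=
  ∀ I : Ideal R, I ≠ ⊥ → ∃ x ∈ I, χ x ≠ 1

/-!
For a generating character `χ`, a left ideal `I` and `x ∈ R`, the map `r ↦ χ (r * x)` is a
character of `I`; it is trivial exactly when `I x = 0`, since otherwise the kernel of `χ` would
contain the nonzero left ideal `I x`. So `∑_{r ∈ I} χ (r * x)` is `|I|` or `0` independently of
`χ`. Every left ideal is the disjoint union of the sets of generators of the cyclic left ideals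
it contains, so by well-founded induction on left ideals the sum over the generators of each
left ideal is independent of `χ` as well. The generators of `R` itself are its units, a finite
ring being Dedekind-finite.
-/

open Finset

section CyclicSubmodules

variable {R M A : Type*} [Ring R] [AddCommGroup M] [Module R M] [Fintype M]

theorem sum_submodule_eq_add_sum_lt [AddCommMonoid A] [Fintype (Submodule R M)] (f : M → A)
    (N : Submodule R M) :
    ∑ m : N, f m = ∑ m with R ∙ m = N, f m + ∑ N' with N' < N, ∑ m with R ∙ m = N', f m := by
  have span_le {m : M} : R ∙ m ≤ N ↔ m ∈ N := Submodule.span_singleton_le_iff_mem m N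
  rw [← sum_subtype (univ.filter (· ∈ N)) (by simp), ← sum_filter_add_sum_filter_not _ (R ∙ · = N)]
  congr 1
  · refine sum_congr (ext fun m => ?_) fun _ _ => rfl
    simp only [mem_filter, mem_univ, true_and]
    exact ⟨fun h => h.2, fun h => ⟨span_le.1 h.le, h⟩⟩
  · rw [← sum_fiberwise_of_maps_to (t := univ.filter (· < N)) (g := (R ∙ ·))]
    · refine sum_congr rfl fun N' hN' => sum_congr (ext fun m => ?_) fun _ _ => rfl
      simp only [mem_filter, mem_univ, true_and] at hN' ⊢
      exact ⟨fun h => h.2, fun h => ⟨⟨span_le.1 (h ▸ hN'.le), h ▸ hN'.ne⟩, h⟩⟩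
    · simp only [mem_filter, mem_univ, true_and]
      exact fun m ⟨hm, hne⟩ => lt_of_le_of_ne (span_le.2 hm) hne

theorem sum_span_singleton_eq_of_sum_submodule_eq [AddCancelCommMonoid A] {f g : M → A}
    (hfg : ∀ N : Submodule R M, ∑ m : N, f m = ∑ m : N, g m) (N : Submodule R M) :
    ∑ m with R ∙ m = N, f m = ∑ m with R ∙ m = N, g m := by
  have := Fintype.ofFinite (Submodule R M)
  induction N using WellFoundedLT.induction with
  | ind N ih =>
    have h := hfg N
    rw [sum_submodule_eq_add_sum_lt, sum_submodule_eq_add_sum_lt,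
      sum_congr rfl fun N' hN' => ih N' (mem_filter.1 hN').2] at h
    exact add_right_cancel h

end CyclicSubmodules

theorem span_singleton_eq_top_iff_isUnit {R : Type*} [Ring R] [IsDedekindFiniteMonoid R] {r : R} :
    R ∙ r = ⊤ ↔ IsUnit r := by
  rw [Ideal.eq_top_iff_one, Submodule.mem_span_singleton, isUnit_iff_exists_inv']
  rfl

theorem sum_units_eq_sum_span_singleton_eq_top {R A : Type*} [Ring R] [Fintype R]
    [AddCommMonoid A] (f : R → A) :
    ∑ u : Rˣ, f u = ∑ r with R ∙ r = ⊤, f r := by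
  refine (sum_map univ ⟨_, Units.val_injective⟩ f).symm.trans (sum_congr ?_ fun _ _ => rfl)
  ext r
  simp [span_singleton_eq_top_iff_isUnit, IsUnit]

namespace IsGenChar

variable {R : Type} [Ring R] [Fintype R] {χ : AddChar R ℂ}

theorem forall_mul_right_eq_one_iff (hχ : IsGenChar χ) (I : Ideal R) (x : R) :
    (∀ r ∈ I, χ (r * x) = 1) ↔ ∀ r ∈ I, r * x = 0 := by
  refine ⟨fun h => ?_, fun h r hr => by rw [h r hr, AddChar.map_zero_eq_one]⟩
  have hIx : Submodule.map (LinearMap.toSpanSingleton R R x) I = ⊥ := by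
    by_contra hne
    obtain ⟨_, ⟨r, hr, rfl⟩, hχr⟩ := hχ _ hne
    exact hχr (h r hr)
  intro r hr
  simpa [hIx] using Submodule.mem_map_of_mem (f := LinearMap.toSpanSingleton R R x) hr

theorem sum_mul_right (hχ : IsGenChar χ) (I : Ideal R) (x : R) :
    ∑ r : I, χ (r * x) = if ∀ r ∈ I, r * x = 0 then (Fintype.card I : ℂ) else 0 := by
  let ψ : AddChar I ℂ :=
    χ.compAddMonoidHom ((AddMonoidHom.mulRight x).comp I.subtype.toAddMonoidHom)
  have hψ : ψ = 0 ↔ ∀ r ∈ I, r * x = 0 := by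
    simp [AddChar.eq_zero_iff, ψ, ← hχ.forall_mul_right_eq_one_iff]
  simpa [hψ, ψ] using ψ.sum_eq_ite

end IsGenChar

/-- The homogeneous weight on a finite Frobenius ring does not depend on the
choice of generating character. -/
theorem whom_indep_of_genChar {R : Type} [Ring R] [Fintype R]
    (χ χ' : AddChar R ℂ) (hχ : IsGenChar χ) (hχ' : IsGenChar χ') (x : R) :
    1 - (Fintype.card Rˣ : ℂ)⁻¹ * ∑ u : Rˣ, χ ((u : R) * x) =
    1 - (Fintype.card Rˣ : ℂ)⁻¹ * ∑ u : Rˣ, χ' ((u : R) * x) := by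
  have sum_ideal_eq (I : Ideal R) : ∑ r : I, χ (r * x) = ∑ r : I, χ' (r * x) := by
    rw [hχ.sum_mul_right, hχ'.sum_mul_right]
  rw [sum_units_eq_sum_span_singleton_eq_top (χ <| · * x),
    sum_units_eq_sum_span_singleton_eq_top (χ' <| · * x),
    sum_span_singleton_eq_of_sum_submodule_eq (f := (χ <| · * x)) (g := (χ' <| · * x))
      sum_ideal_eq ⊤]
end

section
/- For every nonzero left ideal I of a finite Frobenius ring R and every c ∈ R, the sum of the homogeneous weights over the coset I + c equals |I|: Σ_{x ∈ I} w_hom(x + c) = |I|. -/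
open scoped Classical

/-- The normalized homogeneous weight defined from an additive character. -/
noncomputable def whom {R : Type} [Ring R] [Fintype R] (χ : AddChar R ℂ) (x : R) : ℂ :=
  1 - (Fintype.card Rˣ : ℂ)⁻¹ * ∑ u : Rˣ, χ ((u : R) * x)

/-! After swapping the sums over `I` and `Rˣ`, each inner sum `∑_{x ∈ I} χ(u(x + c))` equals
`χ(uc) · ∑_{x ∈ I} χ(x)`, since left multiplication by a unit permutes `I`; and the character sum
over `I` vanishes because `χ` is nontrivial on `I`. -/

lemma AddChar.sum_comp_eq_zero {A B R : Type*} [AddMonoid A] [AddGroup B] [Fintype B]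
    [CommRing R] [IsDomain R] (ψ : AddChar A R) (f : B →+ A) (h : ∃ b, ψ (f b) ≠ 1) :
    ∑ b, ψ (f b) = 0 :=
  sum_eq_zero_of_ne_one (ψ := ψ.compAddMonoidHom f) (ne_one_iff.2 h)

lemma Submodule.sum_units_smul {R M β : Type*} [Ring R] [AddCommMonoid M] [Module R M]
    [AddCommMonoid β] (p : Submodule R M) [Fintype p] (u : Rˣ) (f : M → β) :
    ∑ x : p, f (u • (x : M)) = ∑ x : p, f x :=
  Equiv.sum_comp (MulAction.toPerm u) (fun x : p => f x)

/-- For every nonzero left ideal `I` of a finite Frobenius ring `R` and every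
`c ∈ R`: `Σ_{x ∈ I} w_hom(x + c) = |I|`. -/
theorem sum_whom_coset {R : Type} [Ring R] [Fintype R]
    (χ : AddChar R ℂ) (hχ : IsGenChar χ)
    (I : Ideal R) (hI : I ≠ ⊥) (c : R) :
    ∑ x : I, whom χ ((x : R) + c) = (Nat.card I : ℂ) := by
  obtain ⟨a, haI, ha⟩ := hχ I hI
  have hsum : ∑ x : I, χ x = 0 := χ.sum_comp_eq_zero I.subtype.toAddMonoidHom ⟨⟨a, haI⟩, ha⟩
  have hcoset (u : Rˣ) : ∑ x : I, χ ((u : R) * ((x : R) + c)) = 0 := by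
    have hunit : ∑ x : I, χ ((u : R) * x) = ∑ x : I, χ x := by
      simpa only [Units.smul_def, smul_eq_mul] using I.sum_units_smul u χ
    simp_rw [mul_add, AddChar.map_add_eq_mul, ← Finset.sum_mul, hunit, hsum, zero_mul]
  simp only [whom, Finset.sum_sub_distrib, ← Finset.mul_sum]
  rw [Finset.sum_comm]
  simp [hcoset]
end

section
/- Let I be a nonzero left ideal of a finite Frobenius ring R, r ∈ R with |Ir| = |I|, and s ∈ R. Then Σ_{x∈I} w_hom(x)·w_hom(xr + s) = |I| + |I|·(|R^× ∩ (1+I^⊥)|/|R^×|)·(1 − w_hom(s)). -/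
open scoped Classical

/-!
Rewrite `w(x) = 1 - |R^×|⁻¹ Σ_u χ(x u)`, moving the units to the right with the Nakayama
automorphism of `χ`. Expanding the product, both linear terms vanish when summed over `I`
(as `I r ≠ 0`), and the quadratic term counts the units `w` with `I (w + r) = 0`. Since `R` is
Frobenius, right multiplication by `-r` on `I` is right multiplication by a unit `u₀`
(MacWilliams–Wood extension), so `w ↦ w u₀⁻¹` matches these units with `R^× ∩ (1 + I^⊥)`.

The extension enlarges `I` by one minimal left ideal `K` with `I ∩ K = 0` at a time. `R` is
self-injective (from `|ann_r J| · |J| = |R|` and `|Hom(J, R)| ≤ |J|`), so any hom on `I ⊕ K`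
extending `x ↦ x c` is right multiplication by some `d`, and since `|Hom(K, I)| < |Hom(K, R)|`
its restriction to `K` can be chosen so that `d` stays injective on `I ⊕ K`.
-/

def AddChar.mulShiftRight {R M : Type*} [Ring R] [CommMonoid M] (ψ : AddChar R M) (a : R) :
    AddChar R M :=
  ψ.compAddMonoidHom (AddMonoidHom.mulRight a)

@[simp]
theorem AddChar.mulShiftRight_apply {R M : Type*} [Ring R] [CommMonoid M] (ψ : AddChar R M)
    (a x : R) : ψ.mulShiftRight a x = ψ (x * a) :=
  rfl

section
variable {R : Type*} [Ring R]

def Ideal.restrictMulRight (J : Ideal R) : R →+ (J →ₗ[R] R) where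
  toFun t := (LinearMap.mulRight R t).comp J.subtype
  map_zero' := by ext; simp
  map_add' a b := by ext; simp [mul_add]

@[simp]
theorem Ideal.restrictMulRight_apply (J : Ideal R) (t : R) (x : J) :
    J.restrictMulRight t x = x * t :=
  rfl

theorem card_units_add_mul_unit (I : Ideal R) (r : R) (v : Rˣ) :
    Nat.card {u : Rˣ // ∀ x ∈ I, x * (u + r * v) = 0} =
      Nat.card {w : Rˣ // ∀ x ∈ I, x * (w + r) = 0} :=
  Nat.card_congr <| Equiv.subtypeEquiv (Equiv.mulRight v⁻¹) fun u => forall₂_congr fun x _ => by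
    have h : x * (↑(u * v⁻¹) + r) * v = x * (u + r * v) := by simp [mul_assoc, add_mul]
    rw [← h, Units.mul_left_eq_zero]
    rfl

theorem card_units_sub_eq (I : Ideal R) {c : R} {u₀ : Rˣ} (hu₀ : ∀ x ∈ I, x * c = x * u₀) :
    Nat.card {w : Rˣ // ∀ x ∈ I, x * (w - c) = 0} =
      Nat.card {u : Rˣ // ∀ x ∈ I, x * (u - 1) = 0} :=
  Nat.card_congr <| Equiv.subtypeEquiv (Equiv.mulRight u₀⁻¹) fun w => forall₂_congr fun x hx => by
    rw [mul_sub, hu₀ x hx, ← mul_sub, ← Units.mul_left_eq_zero u₀⁻¹]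
    simp [mul_assoc, sub_mul]

variable {M : Type*} [AddCommGroup M] [Module R M]

instance {N : Type*} [AddCommGroup N] [Module R N] [Finite M] [Finite N] :
    Finite (M →ₗ[R] N) :=
  Finite.of_injective _ DFunLike.coe_injective

theorem Submodule.coprod_subtype_injective {I K : Submodule R M} (hIK : Disjoint I K) :
    Function.Injective (I.subtype.coprod K.subtype) := by
  rw [← LinearMap.ker_eq_bot, LinearMap.ker_coprod_of_disjoint_range, Submodule.ker_subtype,
    Submodule.ker_subtype, Submodule.prod_bot]
  rwa [Submodule.range_subtype, Submodule.range_subtype]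

theorem Submodule.card_linearMap_lt [Finite M] {I K : Submodule R M} (hIK : Disjoint I K)
    (hK : K ≠ ⊥) : Nat.card (K →ₗ[R] I) < Nat.card (K →ₗ[R] M) := by
  have hι := Submodule.coprod_subtype_injective hIK
  have hinj : Function.Injective fun p : (K →ₗ[R] I) × (K →ₗ[R] K) =>
      (I.subtype.coprod K.subtype).comp (p.1.prod p.2) := by
    intro p q hpq
    have hk k : (p.1 k, p.2 k) = (q.1 k, q.2 k) := hι (LinearMap.congr_fun hpq k)
    exact Prod.ext (LinearMap.ext fun k => (Prod.ext_iff.mp (hk k)).1)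
      (LinearMap.ext fun k => (Prod.ext_iff.mp (hk k)).2)
  have : Nontrivial K := Submodule.nontrivial_iff_ne_bot.mpr hK
  have hEnd : 1 < Nat.card (K →ₗ[R] K) := Finite.one_lt_card
  have hpos : 0 < Nat.card (K →ₗ[R] I) := Nat.card_pos
  have hle := Nat.card_le_card_of_injective _ hinj
  rw [Nat.card_prod] at hle
  nlinarith

theorem Ideal.eq_zero_of_mem_sup_of_mul_eq_zero {I K : Ideal R} (hK : IsAtom K) {c d : R}
    (hc : ∀ x ∈ I, x * c = 0 → x = 0) (hd : ∀ x ∈ I, x * d = x * c)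
    (hbad : ¬ ∃ h : K →ₗ[R] I, ∀ k : K, (h k : R) * c = k * d) :
    ∀ z ∈ I ⊔ K, z * d = 0 → z = 0 := by
  let f : I →ₗ[R] R := I.restrictMulRight c
  have hf : Function.Injective f := by
    rw [← LinearMap.ker_eq_bot, LinearMap.ker_eq_bot']
    exact fun x hx => Subtype.ext (hc x x.2 hx)
  let K₁ := (LinearMap.range f).comap (LinearMap.mulRight R d) ⊓ K
  have hK₁ : K₁ = ⊥ := by
    refine (hK.le_iff.mp inf_le_right).resolve_right fun hK₁ => hbad ?_
    have hmem (k : K) : (k : R) * d ∈ LinearMap.range f := (hK₁.ge k.2).1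
    refine ⟨(LinearEquiv.ofInjective f hf).symm.toLinearMap.comp
      ((K.restrictMulRight d).codRestrict _ hmem), fun k => ?_⟩
    have h := congrArg Subtype.val ((LinearEquiv.ofInjective f hf).apply_symm_apply ⟨_, hmem k⟩)
    rw [LinearEquiv.ofInjective_apply] at h
    exact h
  intro z hz hzd
  obtain ⟨a, ha, k, hk, rfl⟩ := Submodule.mem_sup.mp hz
  have hkd : -(a * d) = k * d := neg_eq_of_add_eq_zero_right (by rwa [← add_mul])
  have hkK₁ : k ∈ K₁ := ⟨⟨⟨-a, I.neg_mem ha⟩, by simp [f, ← hd a ha, hkd]⟩, hk⟩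
  rw [hK₁, Submodule.mem_bot] at hkK₁
  subst hkK₁
  rw [add_zero, hd a ha] at hzd
  rw [hc a ha hzd, add_zero]

end

namespace IsGenChar

variable {R : Type} [Ring R] [Fintype R] {χ : AddChar R ℂ}

theorem mul_eq_zero_of_forall_map_eq_one (hχ : IsGenChar χ) {J : Ideal R} {t : R}
    (h : ∀ x ∈ J, χ (x * t) = 1) : ∀ x ∈ J, x * t = 0 := by
  by_contra! hJt
  obtain ⟨x, hx, hxt⟩ := hJt
  obtain ⟨_, ⟨y, hy, rfl⟩, hy1⟩ := hχ (Submodule.map (LinearMap.mulRight R t) J)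
    ((Submodule.ne_bot_iff _).mpr ⟨x * t, Submodule.mem_map_of_mem hx, hxt⟩)
  exact hy1 (h y hy)

theorem sum_map_mul_right (hχ : IsGenChar χ) (J : Ideal R) (t : R) :
    ∑ x : J, χ (x * t) = if ∀ x ∈ J, x * t = 0 then (Nat.card J : ℂ) else 0 := by
  let ψ : AddChar J ℂ :=
    χ.compAddMonoidHom ((AddMonoidHom.mulRight t).comp J.subtype.toAddMonoidHom)
  have hψ : ψ = 0 ↔ ∀ x ∈ J, x * t = 0 := by
    refine ⟨fun h => hχ.mul_eq_zero_of_forall_map_eq_one fun x hx => ?_, fun h => ?_⟩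
    · simpa [ψ] using DFunLike.congr_fun h ⟨x, hx⟩
    · ext x
      simp [ψ, h x x.2]
  rw [Nat.card_eq_fintype_card, ← if_congr hψ rfl rfl]
  exact AddChar.sum_eq_ite ψ

theorem mulShiftRight_injective (hχ : IsGenChar χ) : Function.Injective χ.mulShiftRight := by
  intro a b hab
  have hsub := hχ.mul_eq_zero_of_forall_map_eq_one (J := ⊤) (t := a - b) fun x _ => by
    rw [mul_sub, AddChar.map_sub_eq_div, ← χ.mulShiftRight_apply, hab, χ.mulShiftRight_apply,
      div_self (χ.val_isUnit _).ne_zero]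
  simpa [sub_eq_zero] using hsub 1 trivial

theorem mulShiftRight_bijective (hχ : IsGenChar χ) : Function.Bijective χ.mulShiftRight :=
  (Fintype.bijective_iff_injective_and_card _).mpr
    ⟨hχ.mulShiftRight_injective, AddChar.card_eq.symm⟩

noncomputable def nakayamaFun (hχ : IsGenChar χ) (a : R) : R :=
  (Equiv.ofBijective _ hχ.mulShiftRight_bijective).symm (χ.mulShift a)

theorem map_mul_nakayamaFun (hχ : IsGenChar χ) (a x : R) :
    χ (x * hχ.nakayamaFun a) = χ (a * x) := by
  have h := (Equiv.ofBijective _ hχ.mulShiftRight_bijective).apply_symm_apply (χ.mulShift a)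
  exact DFunLike.congr_fun h x

theorem eq_nakayamaFun (hχ : IsGenChar χ) {a b : R} (h : ∀ x, χ (x * b) = χ (a * x)) :
    b = hχ.nakayamaFun a :=
  hχ.mulShiftRight_injective <| DFunLike.ext _ _ fun x => by simp [h, map_mul_nakayamaFun]

noncomputable def nakayamaHom (hχ : IsGenChar χ) : R →+* R where
  toFun := hχ.nakayamaFun
  map_one' := (hχ.eq_nakayamaFun fun x => by simp).symm
  map_mul' a b := (hχ.eq_nakayamaFun fun x => by
    rw [← mul_assoc, map_mul_nakayamaFun, ← mul_assoc, map_mul_nakayamaFun, mul_assoc]).symm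
  map_zero' := (hχ.eq_nakayamaFun fun x => by simp).symm
  map_add' a b := (hχ.eq_nakayamaFun fun x => by
    rw [mul_add, add_mul, AddChar.map_add_eq_mul, AddChar.map_add_eq_mul,
      map_mul_nakayamaFun, map_mul_nakayamaFun]).symm

theorem nakayamaHom_injective (hχ : IsGenChar χ) : Function.Injective hχ.nakayamaHom := by
  rw [RingHom.injective_iff_ker_eq_bot]
  by_contra hker
  obtain ⟨a, ha, hχa⟩ := hχ _ hker
  have h := hχ.map_mul_nakayamaFun a 1
  rw [show hχ.nakayamaFun a = 0 from ha] at h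
  exact hχa (by simpa using h.symm)

noncomputable def nakayama (hχ : IsGenChar χ) : R ≃+* R :=
  RingEquiv.ofBijective hχ.nakayamaHom (Finite.injective_iff_bijective.mp hχ.nakayamaHom_injective)

theorem map_mul_nakayama (hχ : IsGenChar χ) (a x : R) : χ (x * hχ.nakayama a) = χ (a * x) :=
  hχ.map_mul_nakayamaFun a x

theorem sum_units_map_mul_comm (hχ : IsGenChar χ) (x : R) :
    ∑ u : Rˣ, χ (u * x) = ∑ u : Rˣ, χ (x * u) :=
  Fintype.sum_equiv (Units.mapEquiv hχ.nakayama.toMulEquiv).toEquiv _ _ fun u =>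
    (hχ.map_mul_nakayama u x).symm

theorem eq_zero_of_forall_map_mul_eq_one (hχ : IsGenChar χ) {b : R} (h : ∀ x, χ (b * x) = 1) :
    b = 0 := by
  have hb := hχ.mul_eq_zero_of_forall_map_eq_one (J := ⊤) (t := hχ.nakayama b)
    fun x _ => by rw [map_mul_nakayama, h]
  simpa using hb 1 trivial

theorem card_annihilator_mul_card (hχ : IsGenChar χ) (J : Ideal R) :
    Nat.card {t : R // ∀ x ∈ J, x * t = 0} * Nat.card J = Fintype.card R := by
  have hrow : ∀ x : J, ∑ t : R, χ (x * t) = if x = 0 then (Fintype.card R : ℂ) else 0 := by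
    intro x
    have hx : χ.mulShift x = 0 ↔ x = 0 := by
      refine ⟨fun h => ?_, fun h => by ext; simp [h]⟩
      exact Subtype.ext <| hχ.eq_zero_of_forall_map_mul_eq_one fun y => by
        simpa using DFunLike.congr_fun h y
    simpa [if_congr hx rfl rfl] using AddChar.sum_eq_ite (χ.mulShift x)
  have h : ((Nat.card {t : R // ∀ x ∈ J, x * t = 0} * Nat.card J : ℕ) : ℂ) = Fintype.card R :=
    calc _ = ∑ t : R, ∑ x : J, χ (x * t) := by
          simp [hχ.sum_map_mul_right, Finset.sum_ite, Fintype.card_subtype]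
      _ = Fintype.card R := by
          rw [Finset.sum_comm]
          simp [hrow]
  exact_mod_cast h

theorem card_linearMap_le (hχ : IsGenChar χ) (J : Ideal R) :
    Nat.card (J →ₗ[R] R) ≤ Nat.card J := by
  have hinj : Function.Injective fun f : J →ₗ[R] R => χ.compAddMonoidHom f.toAddMonoidHom := by
    intro f g hfg
    refine LinearMap.ext fun x => hχ.mulShiftRight_injective <| DFunLike.ext _ _ fun a => ?_
    simpa using DFunLike.congr_fun hfg (a • x)
  calc Nat.card (J →ₗ[R] R) ≤ Nat.card (AddChar J ℂ) := Nat.card_le_card_of_injective _ hinj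
    _ = Nat.card J := by simp [Nat.card_eq_fintype_card]

theorem restrictMulRight_surjective (hχ : IsGenChar χ) (J : Ideal R) :
    Function.Surjective J.restrictMulRight := by
  have hker : Nat.card J.restrictMulRight.ker = Nat.card {t : R // ∀ x ∈ J, x * t = 0} :=
    Nat.card_congr <| Equiv.subtypeEquivRight fun t => by
      simp [AddMonoidHom.mem_ker, LinearMap.ext_iff]
  have hrange : Nat.card J.restrictMulRight.range = Nat.card J := by
    have h := J.restrictMulRight.ker.card_mul_index
    rw [AddSubgroup.index_ker, hker, Nat.card_eq_fintype_card (α := R),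
      ← hχ.card_annihilator_mul_card J] at h
    have : Nonempty {t : R // ∀ x ∈ J, x * t = 0} := ⟨⟨0, fun x _ => mul_zero x⟩⟩
    exact Nat.eq_of_mul_eq_mul_left Nat.card_pos h
  rw [← AddMonoidHom.range_eq_top]
  exact AddSubgroup.eq_top_of_le_card _ (hrange ▸ hχ.card_linearMap_le J)

theorem exists_mul_eq_on_sup (hχ : IsGenChar χ) {I K : Ideal R} (hIK : Disjoint I K)
    (f : I →ₗ[R] R) (g : K →ₗ[R] R) :
    ∃ d : R, (∀ x : I, x * d = f x) ∧ ∀ k : K, k * d = g k := by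
  let e := LinearEquiv.ofInjective _ (Submodule.coprod_subtype_injective hIK)
  obtain ⟨d, hd⟩ := hχ.restrictMulRight_surjective _ ((f.coprod g).comp e.symm.toLinearMap)
  refine ⟨d, fun x => ?_, fun k => ?_⟩
  · simpa [e] using LinearMap.congr_fun hd (e (x, 0))
  · simpa [e] using LinearMap.congr_fun hd (e (0, k))

theorem exists_mul_eq_injOn_sup (hχ : IsGenChar χ) {I K : Ideal R} (hIK : Disjoint I K)
    (hK : IsAtom K) {c : R} (hc : ∀ x ∈ I, x * c = 0 → x = 0) :
    ∃ d : R, (∀ x ∈ I, x * d = x * c) ∧ ∀ z ∈ I ⊔ K, z * d = 0 → z = 0 := by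
  obtain ⟨g, hg⟩ : ∃ g : K →ₗ[R] R, ∀ h : K →ₗ[R] I, (I.restrictMulRight c).comp h ≠ g := by
    by_contra! hall
    exact (Submodule.card_linearMap_lt hIK hK.1).not_ge (Nat.card_le_card_of_surjective _ hall)
  obtain ⟨d, hdI, hdK⟩ := hχ.exists_mul_eq_on_sup hIK (I.restrictMulRight c) g
  have hd : ∀ x ∈ I, x * d = x * c := fun x hx => hdI ⟨x, hx⟩
  refine ⟨d, hd, Ideal.eq_zero_of_mem_sup_of_mul_eq_zero hK hc hd ?_⟩
  rintro ⟨h, hh⟩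
  exact hg h (LinearMap.ext fun k => by simp [hh, hdK])

theorem exists_unit_mul_eq (hχ : IsGenChar χ) (I : Ideal R) {c : R}
    (hc : ∀ x ∈ I, x * c = 0 → x = 0) : ∃ u : Rˣ, ∀ x ∈ I, x * c = x * u := by
  induction I using WellFoundedGT.induction generalizing c with
  | _ I ih =>
  by_cases hker : LinearMap.ker (LinearMap.mulRight R c) = ⊥
  · have hreg : IsRightRegular c := LinearMap.ker_eq_bot.mp hker
    exact ⟨hreg.isUnit_of_finite.unit, fun x _ => rfl⟩
  obtain ⟨K, hK, hKc⟩ := (eq_bot_or_exists_atom_le _).resolve_left hker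
  have hIK : Disjoint I K := Submodule.disjoint_def.mpr fun x hxI hxK => hc x hxI (hKc hxK)
  obtain ⟨d, hdc, hd⟩ := hχ.exists_mul_eq_injOn_sup hIK hK hc
  obtain ⟨u, hu⟩ := ih _ (left_lt_sup.mpr fun hKI => hK.1 (hIK.eq_bot_of_ge hKI)) hd
  exact ⟨u, fun x hx => (hdc x hx).symm.trans (hu x (Submodule.mem_sup_left hx))⟩

theorem card_units_add_eq (hχ : IsGenChar χ) {I : Ideal R} {r : R}
    (hr : ∀ x ∈ I, x * r = 0 → x = 0) :
    Nat.card {w : Rˣ // ∀ x ∈ I, x * (w + r) = 0} =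
      Nat.card {u : Rˣ // ∀ x ∈ I, x * (u - 1) = 0} := by
  obtain ⟨u₀, hu₀⟩ := hχ.exists_unit_mul_eq I (c := -r) fun x hx hxr =>
    hr x hx (by rwa [mul_neg, neg_eq_zero] at hxr)
  simpa only [sub_neg_eq_add] using card_units_sub_eq I hu₀

theorem whom_eq (hχ : IsGenChar χ) (x : R) :
    whom χ x = 1 - (Fintype.card Rˣ : ℂ)⁻¹ * ∑ u : Rˣ, χ (x * u) := by
  rw [whom, hχ.sum_units_map_mul_comm]

theorem sum_sum_units_eq_zero (hχ : IsGenChar χ) {I : Ideal R} {r : R}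
    (hr : ∃ x ∈ I, x * r ≠ 0) (s : R) : ∑ x : I, ∑ v : Rˣ, χ ((x * r + s) * v) = 0 := by
  rw [Finset.sum_comm]
  refine Finset.sum_eq_zero fun v _ => ?_
  have hrv : ¬ ∀ x ∈ I, x * (r * v) = 0 := fun h => by
    obtain ⟨x, hx, hxr⟩ := hr
    exact hxr ((Units.mul_left_eq_zero v).mp (by rw [mul_assoc]; exact h x hx))
  simp_rw [add_mul, AddChar.map_add_eq_mul, mul_assoc, ← Finset.sum_mul, hχ.sum_map_mul_right,
    if_neg hrv, zero_mul]

theorem sum_sum_units_mul_sum_units (hχ : IsGenChar χ) (I : Ideal R) (r s : R) :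
    ∑ x : I, (∑ u : Rˣ, χ (x * u)) * ∑ v : Rˣ, χ ((x * r + s) * v) =
      Nat.card I * Nat.card {w : Rˣ // ∀ x ∈ I, x * (w + r) = 0} * ∑ v : Rˣ, χ (s * v) := by
  have hx (x : I) : (∑ u : Rˣ, χ (x * u)) * ∑ v : Rˣ, χ ((x * r + s) * v) =
      ∑ v : Rˣ, ∑ u : Rˣ, χ (x * (u + r * v)) * χ (s * v) := by
    rw [Finset.sum_mul_sum, Finset.sum_comm]
    simp only [mul_add, add_mul, AddChar.map_add_eq_mul, mul_assoc]
  have hv (v : Rˣ) : ∑ u : Rˣ, ∑ x : I, χ (x * (u + r * v)) =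
      Nat.card I * Nat.card {w : Rˣ // ∀ x ∈ I, x * (w + r) = 0} := by
    simp only [hχ.sum_map_mul_right, Finset.sum_ite, Finset.sum_const_zero, add_zero, Finset.sum_const,
      nsmul_eq_mul, ← Fintype.card_subtype, ← Nat.card_eq_fintype_card, card_units_add_mul_unit]
    rw [mul_comm]
  calc _ = ∑ v : Rˣ, (∑ u : Rˣ, ∑ x : I, χ (x * (u + r * v))) * χ (s * v) := by
        simp only [hx, Finset.sum_mul]
        rw [Finset.sum_comm]
        exact Finset.sum_congr rfl fun v _ => Finset.sum_comm
    _ = _ := by simp only [hv, Finset.mul_sum]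

end IsGenChar

/-- If `I` is a nonzero left ideal of a finite Frobenius ring, right
multiplication by `r` is injective on `I`, and `s ∈ R`, then
`Σ_{x∈I} w_hom(x)·w_hom(xr+s)
  = |I| + |I|·(|R^× ∩ (1+I^⊥)|/|R^×|)·(1 − w_hom(s))`. -/
theorem sum_whom_mul_whom_shift {R : Type} [Ring R] [Fintype R]
    (χ : AddChar R ℂ) (hχ : IsGenChar χ)
    (I : Ideal R) (hI : I ≠ ⊥) (r s : R)
    (hinj : ∀ x ∈ I, ∀ y ∈ I, x * r = y * r → x = y) :
    ∑ x : I, whom χ (x : R) * whom χ ((x : R) * r + s) =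
      (Nat.card I : ℂ) +
        (Nat.card I : ℂ) *
          ((Nat.card {u : Rˣ // ∀ a ∈ I, a * ((u : R) - 1) = 0} : ℂ) /
            (Fintype.card Rˣ : ℂ)) * (1 - whom χ s) := by
  obtain ⟨x₀, hx₀, hx₀0⟩ := Submodule.exists_mem_ne_zero_of_ne_bot hI
  have hr : ∀ x ∈ I, x * r = 0 → x = 0 := fun x hx hxr =>
    hinj x hx 0 I.zero_mem (by rw [hxr, zero_mul])
  have hlinear := hχ.sum_sum_units_eq_zero (r := 1) ⟨x₀, hx₀, by rwa [mul_one]⟩ 0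
  have hlinear_shift := hχ.sum_sum_units_eq_zero ⟨x₀, hx₀, fun h => hx₀0 (hr x₀ hx₀ h)⟩ s
  have hquadratic := hχ.sum_sum_units_mul_sum_units I r s
  simp only [mul_one, add_zero] at hlinear
  set n : ℂ := (Fintype.card Rˣ : ℂ)
  have hws : 1 - whom χ s = n⁻¹ * ∑ v : Rˣ, χ (s * v) := by rw [hχ.whom_eq]; ring
  calc ∑ x : I, whom χ x * whom χ (x * r + s)
      = ∑ x : I, (1 - n⁻¹ * ∑ u : Rˣ, χ (x * u) - n⁻¹ * ∑ v : Rˣ, χ ((x * r + s) * v)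
          + n⁻¹ ^ 2 * ((∑ u : Rˣ, χ (x * u)) * ∑ v : Rˣ, χ ((x * r + s) * v))) := by
        simp only [hχ.whom_eq]
        exact Finset.sum_congr rfl fun x _ => by ring
    _ = Nat.card I + n⁻¹ ^ 2 * (Nat.card I * Nat.card {w : Rˣ // ∀ x ∈ I, x * (w + r) = 0}
          * ∑ v : Rˣ, χ (s * v)) := by
        rw [Finset.sum_add_distrib, Finset.sum_sub_distrib, Finset.sum_sub_distrib,
          ← Finset.mul_sum, ← Finset.mul_sum, ← Finset.mul_sum, hlinear, hlinear_shift, hquadratic]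
        simp [Nat.card_eq_fintype_card]
    _ = _ := by rw [hws, hχ.card_units_add_eq hr]; ring
end
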